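/- For |q|<1, the theta function identity ∑_{n∈ℤ} (-1)^n q^{n²} = (q;q)_∞² / (q²;q²)_∞ holds. -/

import Mathlib

open scoped BigOperators

/-- The infinite q-Pochhammer symbol `(a;q)_∞ = ∏_{j=0}^{∞} (1 - a q^j)`. -/
noncomputable def qPochInf (a q : ℂ) : ℂ := ∏' j : ℕ, (1 - a * q ^ j)

/-!
Let `t_N(m) = (-1)^m q^{m²} [2N, N+m]_{q²}`, where `[n, k]_Q` is the Gaussian binomial
coefficient. The three-term recurrence
`[2N+2, N+1+m] = (1 + Q^{2N+1}) [2N, N+m] + Q^{N+1-m} [2N, N+m-1] + Q^{N+1+m} [2N, N+m+1]`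
turns into `∑_m t_{N+1}(m) = (1 - q^{2N+1})² ∑_m t_N(m)`, so `∑_m t_N(m) = (q;q²)_N²`
(the finite form of Jacobi's triple product at `z = -1`). As `N → ∞`, `[2N, N+m]_{q²}`
tends to `1/(q²;q²)_∞` and stays bounded, so by Tannery's theorem
`∑_m (-1)^m q^{m²} = (q;q²)_∞² (q²;q²)_∞`; splitting `(q;q)_∞` into even and odd factors,
`(q;q)_∞ = (q;q²)_∞ (q²;q²)_∞`, gives the identity.
-/

open Finset Filter Topology

noncomputable def qPoch (a q : ℂ) (n : ℕ) : ℂ := ∏ j ∈ range n, (1 - a * q ^ j)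

section Pochhammer

variable {a q : ℂ}

lemma qPoch_succ (n : ℕ) : qPoch a q (n + 1) = qPoch a q n * (1 - a * q ^ n) :=
  prod_range_succ _ _

lemma norm_sq_lt_one (hq : ‖q‖ < 1) : ‖q ^ 2‖ < 1 := by
  rw [norm_pow]
  exact pow_lt_one₀ (norm_nonneg q) hq two_ne_zero

lemma mul_pow_ne_one_of_norm_lt_one (hq : ‖q‖ < 1) (j : ℕ) : q * q ^ j ≠ 1 := by
  intro h
  have := pow_lt_one₀ (norm_nonneg q) hq j.succ_ne_zero
  rw [← norm_pow, pow_succ', h, norm_one] at this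
  exact this.false

lemma summable_norm_mul_pow (a : ℂ) (hq : ‖q‖ < 1) : Summable fun j : ℕ ↦ ‖a * q ^ j‖ := by
  simpa only [norm_mul, norm_pow] using
    (summable_geometric_of_lt_one (norm_nonneg q) hq).mul_left ‖a‖

lemma multipliable_one_sub_mul_pow (a : ℂ) (hq : ‖q‖ < 1) :
    Multipliable fun j : ℕ ↦ 1 - a * q ^ j := by
  simpa only [sub_eq_add_neg] using
    multipliable_one_add_of_summable (f := fun j ↦ -(a * q ^ j))
      (by simpa only [norm_neg] using summable_norm_mul_pow a hq)

lemma tendsto_qPoch (a : ℂ) (hq : ‖q‖ < 1) :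
    Tendsto (qPoch a q) atTop (𝓝 (qPochInf a q)) :=
  (multipliable_one_sub_mul_pow a hq).hasProd.tendsto_prod_nat

lemma qPochInf_ne_zero (hq : ‖q‖ < 1) (ha : ∀ j : ℕ, a * q ^ j ≠ 1) : qPochInf a q ≠ 0 := by
  simpa only [qPochInf, sub_eq_add_neg] using
    tprod_one_add_ne_zero_of_summable (f := fun j ↦ -(a * q ^ j))
      (fun j ↦ by simpa only [← sub_eq_add_neg] using sub_ne_zero.2 (ha j).symm)
      (by simpa only [norm_neg] using summable_norm_mul_pow a hq)

lemma qPochInf_eq_mul (a : ℂ) (hq : ‖q‖ < 1) :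
    qPochInf a q = qPochInf a (q ^ 2) * qPochInf (a * q) (q ^ 2) := by
  rw [qPochInf, ← tprod_even_mul_odd]
  · congr 1 <;> exact tprod_congr fun k ↦ by ring
  · simpa only [pow_mul] using multipliable_one_sub_mul_pow a (norm_sq_lt_one hq)
  · simpa only [pow_succ, pow_mul, mul_assoc, mul_comm q] using
      multipliable_one_sub_mul_pow (a * q) (norm_sq_lt_one hq)

end Pochhammer

section CentralQBinomial

variable {Q : ℂ}

noncomputable def qPochInv (Q : ℂ) (n : ℤ) : ℂ := if 0 ≤ n then (qPoch Q Q n.toNat)⁻¹ else 0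

lemma qPochInv_of_neg {n : ℤ} (hn : n < 0) : qPochInv Q n = 0 := if_neg (not_le.2 hn)

/-- Extending by zero keeps this recursion exact for `n ≤ 0` too (at `n = 0` because
`1 - Q ^ 0 = 0`), so the recurrence for `centralQBinom` has no boundary cases. -/
lemma qPochInv_sub_one (hQ : ∀ j : ℕ, Q * Q ^ j ≠ 1) (n : ℤ) :
    qPochInv Q (n - 1) = (1 - Q ^ n) * qPochInv Q n := by
  rcases lt_or_ge n 0 with hn | hn
  · rw [qPochInv_of_neg hn, qPochInv_of_neg (by omega), mul_zero]
  obtain ⟨k, rfl⟩ := Int.eq_ofNat_of_zero_le hn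
  cases k with
  | zero => simp [qPochInv]
  | succ k =>
    have hk : ((k + 1 : ℕ) : ℤ) - 1 = k := by push_cast; ring
    have hne : 1 - Q * Q ^ k ≠ 0 := sub_ne_zero.2 (hQ k).symm
    simp only [qPochInv, hk, Int.natCast_nonneg, if_true, Int.toNat_natCast, qPoch_succ,
      zpow_natCast, pow_succ']
    field_simp

noncomputable def centralQBinom (Q : ℂ) (N : ℕ) (m : ℤ) : ℂ :=
  qPoch Q Q (2 * N) * qPochInv Q (N + m) * qPochInv Q (N - m)

lemma centralQBinom_eq_zero {N : ℕ} {m : ℤ} (h : N < m.natAbs) : centralQBinom Q N m = 0 := by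
  rcases lt_or_ge m 0 with hm | hm
  · rw [centralQBinom, qPochInv_of_neg (n := N + m) (by omega), mul_zero, zero_mul]
  · rw [centralQBinom, qPochInv_of_neg (n := N - m) (by omega), mul_zero]

lemma centralQBinom_zero_zero : centralQBinom Q 0 0 = 1 := by
  simp [centralQBinom, qPochInv, qPoch]

lemma centralQBinom_succ (hQ0 : Q ≠ 0) (hQ : ∀ j : ℕ, Q * Q ^ j ≠ 1) (N : ℕ) (m : ℤ) :
    centralQBinom Q (N + 1) m = (1 + Q ^ (2 * N + 1)) * centralQBinom Q N m
      + Q ^ ((N : ℤ) + 1 - m) * centralQBinom Q N (m - 1)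
      + Q ^ ((N : ℤ) + 1 + m) * centralQBinom Q N (m + 1) := by
  set A := qPochInv Q (N + 1 + m)
  set B := qPochInv Q (N + 1 - m)
  have shift (n k : ℤ) (h : k = n - 1) : qPochInv Q k = (1 - Q ^ n) * qPochInv Q n := by
    rw [h, qPochInv_sub_one hQ]
  have e₁ : qPochInv Q (N + m) = (1 - Q ^ ((N : ℤ) + 1 + m)) * A := shift _ _ (by ring)
  have e₂ : qPochInv Q (N - m) = (1 - Q ^ ((N : ℤ) + 1 - m)) * B := shift _ _ (by ring)
  have e₃ : qPochInv Q (N + (m - 1)) =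
      (1 - Q ^ ((N : ℤ) + m)) * ((1 - Q ^ ((N : ℤ) + 1 + m)) * A) := by
    rw [← e₁]; exact shift _ _ (by ring)
  have e₄ : qPochInv Q (N - (m + 1)) =
      (1 - Q ^ ((N : ℤ) - m)) * ((1 - Q ^ ((N : ℤ) + 1 - m)) * B) := by
    rw [← e₂]; exact shift _ _ (by ring)
  have e₅ : qPochInv Q (N - (m - 1)) = B := by congr 1; ring
  have e₆ : qPochInv Q (N + (m + 1)) = A := by congr 1; ring
  have e₇ : qPoch Q Q (2 * (N + 1)) =
      qPoch Q Q (2 * N) * (1 - Q * Q ^ (2 * N)) * (1 - Q * Q ^ (2 * N + 1)) := by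
    rw [show 2 * (N + 1) = 2 * N + 1 + 1 by ring, qPoch_succ, qPoch_succ]
  simp only [centralQBinom, e₁, e₂, e₃, e₄, e₅, e₆, e₇, Nat.cast_add, Nat.cast_one,
    zpow_add₀ hQ0, zpow_sub₀ hQ0, zpow_one, zpow_natCast]
  field_simp
  ring

lemma tendsto_qPochInv (hQ : ‖Q‖ < 1) : Tendsto (qPochInv Q) atTop (𝓝 (qPochInf Q Q)⁻¹) := by
  have htoNat : Tendsto Int.toNat atTop atTop :=
    tendsto_atTop_atTop.2 fun b ↦ ⟨b, fun n hn ↦ by omega⟩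
  refine (((tendsto_qPoch Q hQ).inv₀ (qPochInf_ne_zero hQ (mul_pow_ne_one_of_norm_lt_one hQ))).comp
    htoNat).congr' ?_
  filter_upwards [eventually_ge_atTop 0] with n hn using (if_pos hn).symm

lemma tendsto_centralQBinom (hQ : ‖Q‖ < 1) (m : ℤ) :
    Tendsto (fun N : ℕ ↦ centralQBinom Q N m) atTop (𝓝 (qPochInf Q Q)⁻¹) := by
  have h2N : Tendsto (fun N : ℕ ↦ 2 * N) atTop atTop := tendsto_id.const_mul_atTop' two_pos
  have hN : Tendsto (fun N : ℕ ↦ (N : ℤ)) atTop atTop := tendsto_natCast_atTop_atTop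
  have := (((tendsto_qPoch Q hQ).comp h2N).mul ((tendsto_qPochInv hQ).comp
    (tendsto_atTop_add_const_right _ m hN))).mul ((tendsto_qPochInv hQ).comp
    (tendsto_atTop_add_const_right _ (-m) hN))
  simpa only [centralQBinom, Function.comp_def, ← sub_eq_add_neg,
    mul_inv_cancel₀ (qPochInf_ne_zero hQ (mul_pow_ne_one_of_norm_lt_one hQ)), one_mul] using this

lemma exists_norm_centralQBinom_le (hQ : ‖Q‖ < 1) :
    ∃ C, ∀ (N : ℕ) (m : ℤ), ‖centralQBinom Q N m‖ ≤ C := by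
  obtain ⟨B, hB⟩ := isBounded_iff_forall_norm_le.1
    (Metric.isBounded_range_of_tendsto _ (tendsto_qPoch Q hQ))
  obtain ⟨B', hB'⟩ := isBounded_iff_forall_norm_le.1 (Metric.isBounded_range_of_tendsto _
    ((tendsto_qPoch Q hQ).inv₀ (qPochInf_ne_zero hQ (mul_pow_ne_one_of_norm_lt_one hQ))))
  have hB0 : 0 ≤ B := (norm_nonneg _).trans (hB _ ⟨0, rfl⟩)
  have hB'0 : 0 ≤ B' := (norm_nonneg _).trans (hB' _ ⟨0, rfl⟩)
  have hInv (n : ℤ) : ‖qPochInv Q n‖ ≤ B' := by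
    unfold qPochInv
    split_ifs
    · exact hB' _ ⟨_, rfl⟩
    · rwa [norm_zero]
  refine ⟨B * B' * B', fun N m ↦ ?_⟩
  rw [centralQBinom, norm_mul, norm_mul]
  exact mul_le_mul (mul_le_mul (hB _ ⟨_, rfl⟩) (hInv _) (norm_nonneg _) hB0) (hInv _)
    (norm_nonneg _) (by positivity)

end CentralQBinomial

section ThetaApproximants

variable {q : ℂ}

noncomputable def thetaTerm (q : ℂ) (m : ℤ) : ℂ := (-1) ^ m * q ^ (m.natAbs ^ 2)

noncomputable def thetaApprox (q : ℂ) (N : ℕ) (m : ℤ) : ℂ :=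
  thetaTerm q m * centralQBinom (q ^ 2) N m

lemma thetaTerm_add (hq0 : q ≠ 0) (m k : ℤ) :
    thetaTerm q (m + k) = (-1) ^ k * q ^ (k ^ 2) * ((q ^ 2) ^ m) ^ k * thetaTerm q m := by
  have hsq (n : ℤ) : q ^ (n.natAbs ^ 2) = q ^ (n ^ 2) := by
    rw [← zpow_natCast, Nat.cast_pow, Int.natCast_natAbs, sq_abs]
  rw [thetaTerm, thetaTerm, hsq, hsq, show (m + k) ^ 2 = m ^ 2 + 2 * m * k + k ^ 2 by ring,
    zpow_add₀ (by norm_num), zpow_add₀ hq0, zpow_add₀ hq0, zpow_mul, zpow_mul, zpow_ofNat]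
  ring

lemma thetaApprox_succ (hq0 : q ≠ 0) (hq : ∀ j : ℕ, q ^ 2 * (q ^ 2) ^ j ≠ 1) (N : ℕ) (m : ℤ) :
    thetaApprox q (N + 1) m = (1 + q ^ (4 * N + 2)) * thetaApprox q N m
      - q ^ (2 * N + 1) * (thetaApprox q N (m - 1) + thetaApprox q N (m + 1)) := by
  simp only [thetaApprox, centralQBinom_succ (pow_ne_zero 2 hq0) hq, sub_eq_add_neg m 1,
    thetaTerm_add hq0, zpow_add₀ (pow_ne_zero 2 hq0), zpow_sub₀ (pow_ne_zero 2 hq0), zpow_neg,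
    one_pow, neg_one_sq, zpow_one, zpow_natCast]
  field_simp
  ring

lemma thetaApprox_eq_zero {N : ℕ} {m : ℤ} (h : N < m.natAbs) : thetaApprox q N m = 0 := by
  rw [thetaApprox, centralQBinom_eq_zero h, mul_zero]

lemma summable_thetaApprox (q : ℂ) (N : ℕ) : Summable (thetaApprox q N) :=
  summable_of_ne_finset_zero (s := Icc (-N : ℤ) N) fun m hm ↦
    thetaApprox_eq_zero (by rw [mem_Icc] at hm; omega)

lemma tsum_thetaApprox (hq0 : q ≠ 0) (hq : ∀ j : ℕ, q ^ 2 * (q ^ 2) ^ j ≠ 1) (N : ℕ) :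
    ∑' m, thetaApprox q N m = qPoch q (q ^ 2) N ^ 2 := by
  induction N with
  | zero =>
    rw [tsum_eq_single 0 fun m hm ↦ thetaApprox_eq_zero (by omega)]
    simp [thetaApprox, thetaTerm, centralQBinom_zero_zero, qPoch]
  | succ N ih =>
    have hs := summable_thetaApprox q N
    have hs₁ : Summable fun m ↦ thetaApprox q N (m - 1) :=
      (Equiv.subRight (1 : ℤ)).summable_iff (f := thetaApprox q N) |>.2 hs
    have hs₂ : Summable fun m ↦ thetaApprox q N (m + 1) :=
      (Equiv.addRight (1 : ℤ)).summable_iff (f := thetaApprox q N) |>.2 hs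
    have hdown : ∑' m, thetaApprox q N (m - 1) = ∑' m, thetaApprox q N m :=
      (Equiv.subRight (1 : ℤ)).tsum_eq (thetaApprox q N)
    have hup : ∑' m, thetaApprox q N (m + 1) = ∑' m, thetaApprox q N m :=
      (Equiv.addRight (1 : ℤ)).tsum_eq (thetaApprox q N)
    simp only [thetaApprox_succ hq0 hq]
    rw [(hs.mul_left _).tsum_sub ((hs₁.add hs₂).mul_left _), tsum_mul_left, tsum_mul_left,
      hs₁.tsum_add hs₂, hdown, hup, ih, qPoch_succ]
    ring

lemma summable_pow_natAbs {r : ℝ} (hr0 : 0 ≤ r) (hr : r < 1) :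
    Summable fun m : ℤ ↦ r ^ m.natAbs :=
  .of_nat_of_neg (by simpa using summable_geometric_of_lt_one hr0 hr)
    (by simpa using summable_geometric_of_lt_one hr0 hr)

lemma tendsto_tsum_thetaApprox (hq : ‖q‖ < 1) :
    Tendsto (fun N ↦ ∑' m, thetaApprox q N m) atTop
      (𝓝 ((∑' m, thetaTerm q m) * (qPochInf (q ^ 2) (q ^ 2))⁻¹)) := by
  obtain ⟨C, hC⟩ := exists_norm_centralQBinom_le (norm_sq_lt_one hq)
  rw [← tsum_mul_right]
  refine tendsto_tsum_of_dominated_convergence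
    ((summable_pow_natAbs (norm_nonneg q) hq).mul_left C)
    (fun m ↦ (tendsto_centralQBinom (norm_sq_lt_one hq) m).const_mul _) (.of_forall fun N m ↦ ?_)
  rw [thetaApprox, thetaTerm, norm_mul, norm_mul, norm_zpow, norm_neg, norm_one, one_zpow,
    one_mul, norm_pow, mul_comm]
  exact mul_le_mul (hC N m) (pow_le_pow_of_le_one (norm_nonneg q) hq.le
    (Nat.le_self_pow two_ne_zero _)) (by positivity) ((norm_nonneg _).trans (hC 0 0))

end ThetaApproximants

/-- For |q|<1, `∑_{n∈ℤ} (-1)^n q^{n²} = (q;q)_∞²/(q²;q²)_∞`. -/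
theorem stmt_7 (q : ℂ) (hq : ‖q‖ < 1) :
    ∑' n : ℤ, (-1 : ℂ) ^ n * q ^ (n.natAbs ^ 2)
      = qPochInf q q ^ 2 / qPochInf (q ^ 2) (q ^ 2) := by
  rcases eq_or_ne q 0 with rfl | hq0
  · rw [tsum_eq_single 0 fun n hn ↦ by simp [hn]]
    simp [qPochInf]
  have hQ := norm_sq_lt_one hq
  have hL := qPochInf_ne_zero hQ (mul_pow_ne_one_of_norm_lt_one hQ)
  have key : (∑' m, thetaTerm q m) * (qPochInf (q ^ 2) (q ^ 2))⁻¹ = qPochInf q (q ^ 2) ^ 2 :=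
    tendsto_nhds_unique (tendsto_tsum_thetaApprox hq) <| by
      simpa only [tsum_thetaApprox hq0 (mul_pow_ne_one_of_norm_lt_one hQ)] using
        (tendsto_qPoch q hQ).pow 2
  change ∑' n, thetaTerm q n = _
  rw [qPochInf_eq_mul q hq, ← sq, mul_pow, ← key]
  field_simp
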